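/- Let A ∈ GL_n(ℤ) and G = ℤⁿ ⋊_A ℤ. Suppose for some k ≥ 1 the characteristic polynomial of A^k is Σ_{i=0}^{n} a_i x^i and there exists an index i with |a_i| > Σ_{j≠i} |a_j|. Then any length function l on G vanishes on ℤⁿ. -/

import Mathlib

/-! Restricted to `ℤⁿ`, a length function becomes `L = l ∘ ι`, which is subadditive,
absolutely homogeneous and, since `v` is conjugate to `A v`, invariant under `A`. Cayley–Hamilton
for `A^k` gives the relation `Σ aⱼ • A^{kj} v = 0`; solving it for the dominant term yields
`|aᵢ| L v ≤ (Σ_{j ≠ i} |aⱼ|) L v`, which forces `L v = 0` because `L v ≥ 0`. -/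

open Polynomial Matrix

theorem map_zsmul_of_map_add {V G : Type*} [AddGroup V] [Group G] {ι : V → G}
    (hι : ∀ v w, ι (v + w) = ι v * ι w) (n : ℤ) (v : V) : ι (n • v) = ι v ^ n :=
  map_zpow (MonoidHom.mk' (ι ∘ Multiplicative.toAdd) hι) (Multiplicative.ofAdd v) n

section AbsHomogeneous

variable {V : Type*} [AddCommGroup V] {L : V → ℝ}

theorem nonneg_of_subadditive_of_abs_homogeneous (hadd : ∀ v w, L (v + w) ≤ L v + L w)
    (hsmul : ∀ (n : ℤ) v, L (n • v) = |(n : ℝ)| * L v) (v : V) : 0 ≤ L v := by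
  have hzero : L 0 = 0 := by simpa using hsmul 0 v
  have hneg : L (-v) = L v := by simpa using hsmul (-1) v
  have := hadd v (-v)
  rw [add_neg_cancel, hzero, hneg] at this
  linarith

theorem eq_zero_of_relation_of_dominant_coeff (hadd : ∀ v w, L (v + w) ≤ L v + L w)
    (hsmul : ∀ (n : ℤ) v, L (n • v) = |(n : ℝ)| * L v) {ι : Type*} [DecidableEq ι]
    {s : Finset ι} {c : ι → ℤ} {w : ι → V} (hrel : ∑ j ∈ s, c j • w j = 0)
    {x : ℝ} (hw : ∀ j ∈ s, L (w j) = x) {i : ι} (hi : i ∈ s)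
    (hdom : ∑ j ∈ s.erase i, |c j| < |c i|) : x = 0 := by
  have hzero : L 0 = 0 := by simpa using hsmul 0 0
  have hsolve : c i • w i = ∑ j ∈ s.erase i, (-c j) • w j := by
    rw [← Finset.add_sum_erase s _ hi] at hrel
    simp only [neg_smul, Finset.sum_neg_distrib]
    exact eq_neg_of_add_eq_zero_left hrel
  have hle : |(c i : ℝ)| * x ≤ (∑ j ∈ s.erase i, |(c j : ℝ)|) * x :=
    calc |(c i : ℝ)| * x = L (c i • w i) := by rw [hsmul, hw i hi]
      _ ≤ ∑ j ∈ s.erase i, L ((-c j) • w j) := by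
        rw [hsolve]; exact Finset.le_sum_of_subadditive L hzero.le hadd _ _
      _ = (∑ j ∈ s.erase i, |(c j : ℝ)|) * x := by
        rw [Finset.sum_mul]
        refine Finset.sum_congr rfl fun j hj => ?_
        rw [hsmul, hw j (Finset.mem_of_mem_erase hj), Int.cast_neg, abs_neg]
  have hdom' : ∑ j ∈ s.erase i, |(c j : ℝ)| < |(c i : ℝ)| := by exact_mod_cast hdom
  have hx : 0 ≤ x := hw i hi ▸ nonneg_of_subadditive_of_abs_homogeneous hadd hsmul (w i)
  nlinarith

end AbsHomogeneous

theorem Matrix.sum_coeff_smul_pow_mulVec_eq_zero {n R : Type*} [Fintype n] [DecidableEq n]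
    [CommRing R] {M : Matrix n n R} {p : R[X]} (hp : aeval M p = 0) (v : n → R) :
    ∑ j ∈ Finset.range (p.natDegree + 1), p.coeff j • (M ^ j *ᵥ v) = 0 := by
  have := congrArg (· *ᵥ v) hp
  simpa only [aeval_eq_sum_range, sum_mulVec, smul_mulVec, zero_mulVec] using this

section MatrixInvariant

variable {n : Type*} [Fintype n] [DecidableEq n] {L : (n → ℤ) → ℝ} {M : Matrix n n ℤ}

theorem apply_pow_mulVec_eq_of_apply_mulVec_eq (hM : ∀ v, L (M *ᵥ v) = L v) (j : ℕ)
    (v : n → ℤ) : L (M ^ j *ᵥ v) = L v := by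
  induction j with
  | zero => rw [pow_zero, one_mulVec]
  | succ j ih => rw [pow_succ', ← mulVec_mulVec, hM, ih]

theorem eq_zero_of_invariant_of_dominant_coeff (hadd : ∀ v w, L (v + w) ≤ L v + L w)
    (hsmul : ∀ (k : ℤ) v, L (k • v) = |(k : ℝ)| * L v) (hM : ∀ v, L (M *ᵥ v) = L v)
    {p : ℤ[X]} (hp : aeval M p = 0) {i : ℕ} (hi : i ≤ p.natDegree)
    (hdom : ∑ j ∈ (Finset.range (p.natDegree + 1)).erase i, |p.coeff j| < |p.coeff i|)
    (v : n → ℤ) : L v = 0 :=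
  eq_zero_of_relation_of_dominant_coeff hadd hsmul (Matrix.sum_coeff_smul_pow_mulVec_eq_zero hp v)
    (fun j _ => apply_pow_mulVec_eq_of_apply_mulVec_eq hM j v)
    (Finset.mem_range_succ_iff.mpr hi) hdom

end MatrixInvariant

theorem length_function_vanishes_on_Zn_of_dominant_coeff_general
    {G : Type*} [Group G] {m : ℕ} (A : GL (Fin m) ℤ)
    (k : ℕ) (i : ℕ) (hi : i ≤ m)
    (hdom : (Finset.range (m + 1)).sum
        (fun j => if j = i then 0 else |(((A : Matrix (Fin m) (Fin m) ℤ) ^ k).charpoly.coeff j)|)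
      < |(((A : Matrix (Fin m) (Fin m) ℤ) ^ k).charpoly.coeff i)|)
    (ι : (Fin m → ℤ) → G) (hι : ∀ v w : Fin m → ℤ, ι (v + w) = ι v * ι w)
    (t : G) (ht : ∀ v : Fin m → ℤ, t * ι v * t⁻¹ = ι ((A : Matrix (Fin m) (Fin m) ℤ).mulVec v))
    (l : G → ℝ)
    (hpow : ∀ (g : G) (n : ℤ), l (g ^ n) = |(n : ℝ)| * l g)
    (hconj : ∀ a g : G, l (a * g * a⁻¹) = l g)
    (hcomm : ∀ a b : G, a * b = b * a → l (a * b) ≤ l a + l b) :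
    ∀ v : Fin m → ℤ, l (ι v) = 0 := by
  set B : Matrix (Fin m) (Fin m) ℤ := (A : Matrix (Fin m) (Fin m) ℤ)
  have hadd (v w : Fin m → ℤ) : l (ι (v + w)) ≤ l (ι v) + l (ι w) :=
    hι v w ▸ hcomm _ _ (by rw [← hι, ← hι, add_comm])
  have hsmul (n : ℤ) (v : Fin m → ℤ) : l (ι (n • v)) = |(n : ℝ)| * l (ι v) := by
    rw [map_zsmul_of_map_add hι, hpow]
  have hB (v : Fin m → ℤ) : l (ι (B *ᵥ v)) = l (ι v) := by rw [← ht, hconj]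
  have hdeg : (B ^ k).charpoly.natDegree = m := by
    rw [Matrix.charpoly_natDegree_eq_dim, Fintype.card_fin]
  refine eq_zero_of_invariant_of_dominant_coeff (L := l ∘ ι) hadd hsmul
    (apply_pow_mulVec_eq_of_apply_mulVec_eq hB k) (Matrix.aeval_self_charpoly _)
    (hdeg ▸ hi) ?_
  rw [hdeg, ← Finset.filter_ne', Finset.sum_filter]
  simpa only [ne_eq, ite_not] using hdom

/-- Let `A ∈ GL_n(ℤ)` and `G = ℤⁿ ⋊_A ℤ`.  If for some `k ≥ 1` the characteristic
polynomial `Σ a_i x^i` of `A^k` has a coefficient dominating the sum of the absolute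
values of the others, then any length function on `G` vanishes on `ℤⁿ`. -/
theorem length_function_vanishes_on_Zn_of_dominant_coeff
    {G : Type*} [Group G] {m : ℕ} (A : GL (Fin m) ℤ)
    (k : ℕ) (hk : 1 ≤ k) (i : ℕ) (hi : i ≤ m)
    (hdom : (Finset.range (m + 1)).sum
        (fun j => if j = i then 0 else |(((A : Matrix (Fin m) (Fin m) ℤ) ^ k).charpoly.coeff j)|)
      < |(((A : Matrix (Fin m) (Fin m) ℤ) ^ k).charpoly.coeff i)|)
    (ι : (Fin m → ℤ) → G) (hι : ∀ v w : Fin m → ℤ, ι (v + w) = ι v * ι w)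
    (hinj : Function.Injective ι)
    (t : G) (ht : ∀ v : Fin m → ℤ, t * ι v * t⁻¹ = ι ((A : Matrix (Fin m) (Fin m) ℤ).mulVec v))
    (l : G → ℝ)
    (hnonneg : ∀ g : G, 0 ≤ l g)
    (hpow : ∀ (g : G) (n : ℤ), l (g ^ n) = |(n : ℝ)| * l g)
    (hconj : ∀ a g : G, l (a * g * a⁻¹) = l g)
    (hcomm : ∀ a b : G, a * b = b * a → l (a * b) ≤ l a + l b) :
    ∀ v : Fin m → ℤ, l (ι v) = 0 :=
  length_function_vanishes_on_Zn_of_dominant_coeff_general A k i hi hdom ι hι t ht l hpow hconj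
    hcomm
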